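/- arXiv:quant-ph/0509059 — 4 statements merged into one kernel-verified Lean document; each statement's English description precedes it below -/
import Mathlib

section
/- If G is an n-vertex circulant graph whose adjacency matrix has maximum eigenvalue multiplicity bounded by a constant c (independent of n), then the continuous-time quantum walk on G starting at vertex 0 is average uniform mixing: every vertex has average probability p̄_j = O(1/n); concretely, |p̄_j − 1/n| ≤ c(c−1)/(2n) for all j. -/
/-!
The Fourier matrix `F j k = ω ^ (j k)` of `ZMod n` diagonalises every circulant matrix, the
eigenvalue at `k` being the discrete Fourier transform of the first column; for a symmetric
connection set it is the real number `λ k`. Hence `exp (-i t A) j 0 = n⁻¹ ∑ₖ ω ^ (j k) e^{-i t λ k}`,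
and `|exp (-i t A) j 0|²` is a trigonometric polynomial whose time average keeps exactly the pairs
`(k, l)` with `λ k = λ l`, so `p̄ j = n⁻² ∑_{λ k = λ l} ω ^ (j (k - l))`. The `n` diagonal pairs
contribute `1 / n`, and every `k` has at most `c - 1` partners `l ≠ k`, so
`|p̄ j - 1 / n| ≤ (c - 1) / n ≤ c (c - 1) / (2 n)`.
-/

open Matrix Complex Filter Real
open scoped Classical

/-- The average (limiting) probability of a continuous-time quantum walk on a graph
with adjacency matrix `A`, starting at vertex `s`, of being at vertex `j`. -/
noncomputable def avgProb {V : Type*} [Fintype V] [DecidableEq V]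
    (A : Matrix V V ℂ) (s j : V) (p : ℝ) : Prop :=
  Tendsto (fun T : ℝ =>
      (1 / T) * ∫ t in (0:ℝ)..T,
        ‖(NormedSpace.exp ((-Complex.I * (t : ℂ)) • A)) j s‖ ^ 2)
    atTop (nhds p)

open scoped Topology ComplexConjugate

theorem tendsto_average_exp_mul_I (ν : ℝ) :
    Tendsto (fun T : ℝ => (T : ℂ)⁻¹ * ∫ t in (0:ℝ)..T, cexp (ν * t * I)) atTop
      (𝓝 (if ν = 0 then 1 else 0)) := by
  split_ifs with hν
  · refine tendsto_const_nhds.congr' ?_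
    filter_upwards [eventually_ne_atTop 0] with T hT
    simp [hν, hT]
  · have hc : (ν : ℂ) * I ≠ 0 := mul_ne_zero (ofReal_ne_zero.mpr hν) I_ne_zero
    have hint : ∀ T : ℝ,
        ∫ t in (0:ℝ)..T, cexp (ν * t * I) = (cexp (ν * I * T) - 1) / (ν * I) := by
      intro T
      simp_rw [mul_right_comm _ _ I]
      simpa using integral_exp_mul_complex (a := 0) (b := T) hc
    have hbound : ∀ T : ℝ, ‖(cexp (ν * I * T) - 1) / (ν * I)‖ ≤ 2 / |ν| := by
      intro T
      rw [norm_div, norm_mul, norm_I, mul_one, norm_real, Real.norm_eq_abs]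
      gcongr
      calc ‖cexp (ν * I * T) - 1‖ ≤ ‖cexp (ν * I * T)‖ + ‖(1 : ℂ)‖ := norm_sub_le _ _
        _ = 2 := by
          rw [mul_right_comm, ← ofReal_mul, norm_exp_ofReal_mul_I, norm_one]; norm_num
    simp_rw [hint]
    have hinv : Tendsto (fun T : ℝ => (T : ℂ)⁻¹) atTop (𝓝 0) := by
      simpa [Function.comp_def] using (continuous_ofReal.tendsto 0).comp tendsto_inv_atTop_zero
    exact hinv.zero_mul_isBoundedUnder_le (isBoundedUnder_of ⟨2 / |ν|, hbound⟩)

theorem tendsto_average_of_ofReal_eq_sum_exp {ι : Type*} [Fintype ι] (f : ℝ → ℝ) (w : ι → ℂ)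
    (ν : ι → ℝ) (hf : ∀ t : ℝ, (f t : ℂ) = ∑ i, w i * cexp (ν i * t * I)) :
    Tendsto (fun T : ℝ => 1 / T * ∫ t in (0:ℝ)..T, f t) atTop
      (𝓝 (∑ i, if ν i = 0 then w i else 0).re) := by
  have hint : ∀ i (T : ℝ),
      IntervalIntegrable (fun t : ℝ => cexp (ν i * t * I)) MeasureTheory.volume 0 T := fun i T =>
    (by fun_prop : Continuous fun t : ℝ => cexp (ν i * t * I)).intervalIntegrable 0 T
  have hcomplex : ∀ T : ℝ, (((1 / T * ∫ t in (0:ℝ)..T, f t : ℝ)) : ℂ)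
      = ∑ i, w i * ((T : ℂ)⁻¹ * ∫ t in (0:ℝ)..T, cexp (ν i * t * I)) := by
    intro T
    simp_rw [ofReal_mul, ← intervalIntegral.integral_ofReal, hf,
      intervalIntegral.integral_finsetSum fun i _ => (hint i T).const_mul (w i),
      intervalIntegral.integral_const_mul, Finset.mul_sum]
    refine Finset.sum_congr rfl fun i _ => ?_
    push_cast
    ring
  have hlim := tendsto_finsetSum Finset.univ fun i _ =>
    (tendsto_average_exp_mul_I (ν i)).const_mul (w i)
  simp_rw [mul_ite, mul_one, mul_zero, ← hcomplex] at hlim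
  simpa only [Function.comp_def, ofReal_re] using (continuous_re.tendsto _).comp hlim

theorem norm_sum_ite_eq_sub_one_le {ι : Type*} [Fintype ι] (lam : ι → ℝ) (c : ℕ)
    (hmult : ∀ x, (Finset.univ.filter (fun k => lam k = x)).card ≤ c)
    (w : ι → ℂ) (hw : ∀ l, ‖w l‖ ≤ 1) (k : ι) (hk : w k = 1) :
    ‖∑ l, (if lam l = lam k then w l else 0) - 1‖ ≤ c - 1 := by
  set s := Finset.univ.filter (fun l => lam l = lam k)
  have hks : k ∈ s := by simp [s]
  rw [← Finset.sum_filter, ← Finset.add_sum_erase s _ hks, hk, add_sub_cancel_left]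
  calc ‖∑ l ∈ s.erase k, w l‖ ≤ ∑ l ∈ s.erase k, 1 := norm_sum_le_of_le _ fun l _ => hw l
    _ = s.card - 1 := by
      rw [Finset.sum_const, Finset.card_erase_of_mem hks, nsmul_one,
        Nat.cast_sub (Finset.card_pos.mpr ⟨k, hks⟩), Nat.cast_one]
    _ ≤ c - 1 := by gcongr; exact_mod_cast hmult _

theorem norm_sum_sum_ite_eq_sub_card_le {ι : Type*} [Fintype ι] (lam : ι → ℝ) (c : ℕ)
    (hmult : ∀ x, (Finset.univ.filter (fun k => lam k = x)).card ≤ c)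
    (w : ι → ι → ℂ) (hw : ∀ k l, ‖w k l‖ ≤ 1) (hdiag : ∀ k, w k k = 1) :
    ‖∑ k, ∑ l, (if lam l = lam k then w k l else 0) - Fintype.card ι‖
      ≤ Fintype.card ι * (c - 1) := by
  have hsplit : ∑ k, ∑ l, (if lam l = lam k then w k l else 0) - Fintype.card ι
      = ∑ k, (∑ l, (if lam l = lam k then w k l else 0) - 1) := by
    rw [Finset.sum_sub_distrib, Finset.sum_const, Finset.card_univ, nsmul_one]
  rw [hsplit]
  calc _ ≤ ∑ _k : ι, ((c : ℝ) - 1) := norm_sum_le_of_le _ fun k _ =>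
        norm_sum_ite_eq_sub_one_le lam c hmult (w k) (hw k) k (hdiag k)
    _ = Fintype.card ι * (c - 1) := by
      rw [Finset.sum_const, Finset.card_univ, nsmul_eq_mul]

theorem abs_re_div_sq_sub_inv_le {x : ℝ} (hx : 0 < x) {S : ℂ} {c : ℕ}
    (hS : ‖S - x‖ ≤ x * (c - 1)) :
    |(S / (x : ℂ) ^ 2).re - 1 / x| ≤ c * (c - 1) / (2 * x) := by
  have hc : (c : ℝ) - 1 ≤ c * (c - 1) / 2 := by
    rcases c with _ | _ | c
    · norm_num
    · norm_num
    · push_cast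
      nlinarith
  have hdiff : (S / (x : ℂ) ^ 2).re - 1 / x = ((S - x) / (x : ℂ) ^ 2).re := by
    rw [sub_div, sub_re, ← ofReal_pow, div_ofReal_re, div_ofReal_re, ofReal_re]
    field_simp
  calc |(S / (x : ℂ) ^ 2).re - 1 / x| ≤ ‖S - x‖ / x ^ 2 := by
        rw [hdiff]
        refine (abs_re_le_norm _).trans_eq ?_
        rw [norm_div, norm_pow, norm_real, Real.norm_of_nonneg hx.le]
    _ ≤ x * (c - 1) / x ^ 2 := by gcongr
    _ = (c - 1) / x := by field_simp
    _ ≤ c * (c - 1) / (2 * x) := by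
        rw [← div_div]
        exact div_le_div_of_nonneg_right hc hx.le

namespace ZMod
variable {n : ℕ} [NeZero n]

variable (n) in
noncomputable def fourierMatrix : Matrix (ZMod n) (ZMod n) ℂ :=
  Matrix.of fun j k => stdAddChar (j * k)

theorem fourierMatrix_mul_conjTranspose :
    fourierMatrix n * (fourierMatrix n)ᴴ = (n : ℂ) • 1 := by
  ext j l
  have hchar : ∀ k,
      stdAddChar (j * k) * star (stdAddChar (l * k)) = stdAddChar (k * (j - l)) := by
    intro k
    rw [← starRingEnd_apply, ← AddChar.map_neg_eq_conj, ← AddChar.map_add_eq_mul]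
    ring_nf
  simp only [mul_apply, conjTranspose_apply, fourierMatrix, of_apply, hchar,
    AddChar.sum_mulShift _ (isPrimitive_stdAddChar n), sub_eq_zero, ZMod.card, Matrix.smul_apply,
    one_apply]
  split_ifs <;> simp

theorem fourierMatrix_mul_inv_smul_conjTranspose :
    fourierMatrix n * ((n : ℂ)⁻¹ • (fourierMatrix n)ᴴ) = 1 := by
  rw [mul_smul_comm, fourierMatrix_mul_conjTranspose, smul_smul,
    inv_mul_cancel₀ (Nat.cast_ne_zero.mpr (NeZero.ne n)), one_smul]

theorem inv_fourierMatrix : (fourierMatrix n)⁻¹ = (n : ℂ)⁻¹ • (fourierMatrix n)ᴴ :=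
  inv_eq_right_inv fourierMatrix_mul_inv_smul_conjTranspose

theorem isUnit_fourierMatrix : IsUnit (fourierMatrix n) :=
  (isUnit_iff_isUnit_det _).mpr
    (isUnit_det_of_right_inverse fourierMatrix_mul_inv_smul_conjTranspose)

theorem circulant_mul_fourierMatrix (v : ZMod n → ℂ) :
    circulant v * fourierMatrix n = fourierMatrix n * diagonal (𝓕 v) := by
  ext j k
  rw [mul_diagonal, mul_apply, dft_apply, Finset.mul_sum]
  refine Fintype.sum_equiv (Equiv.subLeft j) _ _ fun d => ?_
  simp only [circulant_apply, fourierMatrix, of_apply, Equiv.subLeft_apply,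
    smul_eq_mul, ← mul_assoc, ← AddChar.map_add_eq_mul]
  ring_nf

theorem exp_smul_circulant_apply_zero (z : ℂ) (v : ZMod n → ℂ) (j : ZMod n) :
    NormedSpace.exp (z • circulant v) j 0
      = (n : ℂ)⁻¹ * ∑ k, stdAddChar (j * k) * cexp (z * 𝓕 v k) := by
  have hdiag : z • circulant v
      = fourierMatrix n * diagonal (z • 𝓕 v) * (fourierMatrix n)⁻¹ := by
    rw [← mul_nonsing_inv_cancel_right (fourierMatrix n) (circulant v)
      ((isUnit_iff_isUnit_det _).mp isUnit_fourierMatrix),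
      circulant_mul_fourierMatrix, diagonal_smul, mul_smul_comm, smul_mul]
  rw [hdiag, exp_conj _ _ isUnit_fourierMatrix, exp_diagonal, inv_fourierMatrix, Pi.exp_def,
    ← Complex.exp_eq_exp_ℂ, mul_apply, Finset.mul_sum]
  refine Finset.sum_congr rfl fun k _ => ?_
  simp only [mul_diagonal, Matrix.smul_apply, conjTranspose_apply, fourierMatrix, of_apply,
    zero_mul, AddChar.map_zero_eq_one, star_one, Pi.smul_apply, smul_eq_mul]
  ring

theorem re_stdAddChar_mul (d k : ZMod n) :
    (stdAddChar (d * k)).re = Real.cos (2 * π * k.val * d.val / n) := by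
  have hcast : d * k = ((d.val * k.val : ℕ) : ZMod n) := by simp
  rw [hcast, stdAddChar_apply, toCircle_natCast, ← exp_ofReal_mul_I_re]
  congr 2
  push_cast
  ring

theorem dft_ofReal_of_even (g : ZMod n → ℝ) (hg : ∀ x, g (-x) = g x) (k : ZMod n) :
    𝓕 (fun x => (g x : ℂ)) k = ((∑ d, g d * Real.cos (2 * π * k.val * d.val / n) : ℝ) : ℂ) := by
  have hconj : conj (𝓕 (fun x => (g x : ℂ)) k) = 𝓕 (fun x => (g x : ℂ)) k := by
    have heven : 𝓕 (fun x => (g x : ℂ)) (-k) = 𝓕 (fun x => (g x : ℂ)) k := by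
      rw [← congr_fun (dft_comp_neg _) k]
      simp only [hg]
    conv_rhs => rw [← heven]
    rw [dft_apply, dft_apply, map_sum]
    refine Finset.sum_congr rfl fun d _ => ?_
    rw [smul_eq_mul, smul_eq_mul, map_mul, conj_ofReal, ← AddChar.map_neg_eq_conj]
    ring_nf
  rw [← conj_eq_iff_re.mp hconj, dft_apply, re_sum]
  congr 1
  refine Finset.sum_congr rfl fun d _ => ?_
  rw [smul_eq_mul, re_mul_ofReal, AddChar.map_neg_eq_conj, conj_re, re_stdAddChar_mul, mul_comm]

theorem sq_norm_exp_smul_circulant_apply_zero (v : ZMod n → ℂ) (lam : ZMod n → ℝ)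
    (hv : ∀ k, 𝓕 v k = lam k) (t : ℝ) (j : ZMod n) :
    ((‖NormedSpace.exp ((-I * t) • circulant v) j 0‖ ^ 2 : ℝ) : ℂ)
      = ∑ q : ZMod n × ZMod n, (n : ℂ)⁻¹ ^ 2 * stdAddChar (j * (q.1 - q.2))
          * cexp ((lam q.2 - lam q.1 : ℝ) * t * I) := by
  have hterm : ∀ k l : ZMod n,
      stdAddChar (j * k) * cexp (-I * t * lam k)
          * conj (stdAddChar (j * l) * cexp (-I * t * lam l))
        = stdAddChar (j * (k - l)) * cexp ((lam l - lam k : ℝ) * t * I) := by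
    intro k l
    rw [(starRingEnd ℂ).map_mul, ← AddChar.map_neg_eq_conj, ← exp_conj, mul_mul_mul_comm,
      ← AddChar.map_add_eq_mul, ← Complex.exp_add]
    congr 2
    · ring
    · simp only [map_mul, map_neg, conj_I, conj_ofReal]
      push_cast
      ring
  rw [exp_smul_circulant_apply_zero, ← normSq_eq_norm_sq, ← mul_conj]
  simp_rw [hv, map_mul, map_sum, map_inv₀, map_natCast, mul_mul_mul_comm, Finset.sum_mul_sum,
    hterm, ← Fintype.sum_prod_type', Finset.mul_sum, ← mul_assoc, sq]

end ZMod

theorem circulant_bounded_multiplicity_uniform_mixing_general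
    (n : ℕ) [NeZero n] (c : ℕ)
    (a : ZMod n → Prop) [DecidablePred a]
    (hsymm : ∀ k : ZMod n, a (-k) ↔ a k)
    (A : Matrix (ZMod n) (ZMod n) ℝ)
    (hA : ∀ j k : ZMod n, A j k = if a (k - j) then 1 else 0)
    (lam : ZMod n → ℝ)
    (hlam : ∀ k : ZMod n,
      lam k = ∑ d : ZMod n, A 0 d * Real.cos (2 * Real.pi * k.val * d.val / n))
    (hmult : ∀ x : ℝ, (Finset.univ.filter (fun k : ZMod n => lam k = x)).card ≤ c) :
    ∀ j : ZMod n, ∃ p : ℝ,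
      avgProb (A.map Complex.ofReal) 0 j p ∧
      |p - 1 / n| ≤ (c : ℝ) * ((c : ℝ) - 1) / (2 * n) := by
  intro j
  have heven : ∀ x, A 0 (-x) = A 0 x := fun x => by simp only [hA, sub_zero, hsymm]
  have hcirc : A.map ofReal = circulant fun x => (A 0 x : ℂ) := by
    ext k l
    rw [map_apply, circulant_apply, hA, hA, sub_zero, ← neg_sub k l]
    simp only [hsymm]
  have hdft : ∀ k, ZMod.dft (fun x => (A 0 x : ℂ)) k = lam k := fun k => by
    rw [ZMod.dft_ofReal_of_even _ heven, hlam]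
  set S := ∑ k, ∑ l, if lam l = lam k then ZMod.stdAddChar (j * (k - l)) else 0
  refine ⟨(S / (n : ℂ) ^ 2).re, ?_, ?_⟩
  · rw [avgProb, hcirc]
    convert tendsto_average_of_ofReal_eq_sum_exp _ _ _
      (ZMod.sq_norm_exp_smul_circulant_apply_zero _ lam hdft · j) using 3
    simp only [S, div_eq_inv_mul, inv_pow, Fintype.sum_prod_type, sub_eq_zero, Finset.mul_sum,
      mul_ite, mul_zero, eq_comm]
  · have hS := norm_sum_sum_ite_eq_sub_card_le lam c hmult
      (fun k l => ZMod.stdAddChar (j * (k - l)))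
      (fun k l => (AddChar.norm_apply _ _).le) (fun k => by simp)
    rw [ZMod.card, ← ofReal_natCast] at hS
    simpa only [ofReal_natCast] using
      abs_re_div_sq_sub_inv_le (Nat.cast_pos.mpr (Nat.pos_of_ne_zero (NeZero.ne n))) hS

/-- A circulant graph whose maximum eigenvalue multiplicity is bounded by a
constant `c` is average uniform mixing: `|p̄_j − 1/n| ≤ c(c−1)/(2n)` for every vertex `j`. -/
theorem circulant_bounded_multiplicity_uniform_mixing
    (n : ℕ) [NeZero n] (c : ℕ)
    (a : ZMod n → Prop) [DecidablePred a]
    (ha0 : ¬ a 0) (hsymm : ∀ k : ZMod n, a (-k) ↔ a k)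
    (A : Matrix (ZMod n) (ZMod n) ℝ)
    (hA : ∀ j k : ZMod n, A j k = if a (k - j) then 1 else 0)
    (lam : ZMod n → ℝ)
    (hlam : ∀ k : ZMod n,
      lam k = ∑ d : ZMod n, A 0 d * Real.cos (2 * Real.pi * k.val * d.val / n))
    (hmult : ∀ x : ℝ, (Finset.univ.filter (fun k : ZMod n => lam k = x)).card ≤ c) :
    ∀ j : ZMod n, ∃ p : ℝ,
      avgProb (A.map Complex.ofReal) 0 j p ∧
      |p - 1 / n| ≤ (c : ℝ) * ((c : ℝ) - 1) / (2 * n) :=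
  circulant_bounded_multiplicity_uniform_mixing_general n c a hsymm A hA lam hlam hmult
end

section
/- For the continuous-time quantum walk on the cone K_1 + C over an ℓ-regular circulant C of order n, starting at the apex vertex, the average probability of the apex is p̄_0 = 1 − (1/2)·n/(n + (ℓ/2)²). In particular p̄_0 ≥ 1/2, so the cone of any circulant is never average uniform mixing (for n → ∞). -/
/-
The apex vector is, up to the factor 1/(x₊ - x₋), the difference of the two vectors
[x±, 1, …, 1], which are eigenvectors of the cone because every row of C sums to ℓ. Hence the
apex amplitude is (x₊ e^{-itλ₊} - x₋ e^{-itλ₋}) / (x₊ - x₋), whose squared modulus is a constant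
plus a multiple of cos((λ₊ - λ₋) t). The oscillating part averages out, leaving
(x₊² + x₋²) / (x₊ - x₋)² = (ℓ² + 2n) / (ℓ² + 4n) ≥ 1/2.
-/

open Matrix Complex Filter Real

theorem tendsto_average_const_add_mul_cos (a b ω : ℝ) (hω : ω ≠ 0) :
    Tendsto (fun T => 1 / T * ∫ t in (0:ℝ)..T, (a + b * Real.cos (ω * t))) atTop (nhds a) := by
  have hint : ∀ T, ∫ t in (0:ℝ)..T, (a + b * Real.cos (ω * t))
      = a * T + b / ω * Real.sin (ω * T) := by
    intro T
    rw [intervalIntegral.integral_add intervalIntegrable_const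
      ((by fun_prop : Continuous fun t => b * Real.cos (ω * t)).intervalIntegrable _ _),
      intervalIntegral.integral_const_mul, intervalIntegral.integral_comp_mul_left _ hω,
      integral_cos]
    simp only [intervalIntegral.integral_const, sub_zero, smul_eq_mul, mul_zero, Real.sin_zero]
    field_simp
  have hdecay : Tendsto (fun T => T⁻¹ * (b / ω * Real.sin (ω * T))) atTop (nhds 0) :=
    tendsto_inv_atTop_zero.zero_mul_isBoundedUnder_le
      (isBoundedUnder_of ⟨|b / ω|, fun T => by
        simpa [abs_mul] using
          mul_le_mul_of_nonneg_left (abs_sin_le_one (ω * T)) (abs_nonneg (b / ω))⟩)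
  have hlim : Tendsto (fun T => a + T⁻¹ * (b / ω * Real.sin (ω * T))) atTop (nhds a) := by
    simpa using tendsto_const_nhds.add hdecay
  refine hlim.congr' ?_
  filter_upwards [eventually_ne_atTop 0] with T hT
  rw [hint]
  field_simp

attribute [local instance] Matrix.linftyOpNormedRing Matrix.linftyOpNormedAlgebra in
theorem Matrix.exp_mulVec_of_mulVec_eq_smul {m : Type*} [Fintype m] [DecidableEq m]
    {M : Matrix m m ℂ} {v : m → ℂ} {μ : ℂ} (h : M *ᵥ v = μ • v) :
    NormedSpace.exp M *ᵥ v = Complex.exp μ • v := by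
  have hpow : ∀ k : ℕ, M ^ k *ᵥ v = μ ^ k • v := by
    intro k
    induction k with
    | zero => simp
    | succ k ih => rw [pow_succ, ← mulVec_mulVec, h, mulVec_smul, ih, smul_smul, pow_succ']
  have hM := (NormedSpace.exp_series_hasSum_exp' (𝕂 := ℂ) M).map
    (mulVec.addMonoidHomLeft v) (continuous_id.matrix_mulVec continuous_const)
  have hμ := (NormedSpace.exp_series_hasSum_exp' (𝕂 := ℂ) μ).smul_const v
  rw [← Complex.exp_eq_exp_ℂ] at hμ
  refine hM.unique ?_
  convert hμ using 2 with k
  simp [mulVec.addMonoidHomLeft, smul_mulVec, hpow, smul_smul]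

theorem Matrix.exp_apply_self_of_single_eq_smul_sub {m : Type*} [Fintype m] [DecidableEq m]
    {M : Matrix m m ℂ} {v w : m → ℂ} {μ ν d : ℂ} (hv : M *ᵥ v = μ • v) (hw : M *ᵥ w = ν • w)
    {s : m} (hs : Pi.single s 1 = d • (v - w)) :
    NormedSpace.exp M s s = d * (v s * Complex.exp μ - w s * Complex.exp ν) := by
  have hcol : NormedSpace.exp M s s = (NormedSpace.exp M *ᵥ Pi.single s 1) s := by
    rw [mulVec_single_one, col_apply]
  rw [hcol, hs, mulVec_smul, mulVec_sub, exp_mulVec_of_mulVec_eq_smul hv,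
    exp_mulVec_of_mulVec_eq_smul hw]
  simp only [Pi.smul_apply, Pi.sub_apply, smul_eq_mul]
  ring

theorem norm_sq_mul_exp_sub_mul_exp (r s a b : ℝ) :
    ‖(r : ℂ) * Complex.exp (a * I) - (s : ℂ) * Complex.exp (b * I)‖ ^ 2
      = r ^ 2 + s ^ 2 - 2 * r * s * Real.cos (a - b) := by
  rw [Complex.sq_norm, Complex.normSq_apply]
  simp only [exp_mul_I, sub_re, mul_re, ofReal_re, add_re, cos_ofReal_re, sin_ofReal_re, I_re,
    mul_zero, sin_ofReal_im, I_im, mul_one, sub_self, add_zero, ofReal_im, add_im, cos_ofReal_im,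
    mul_im, zero_add, zero_mul, sub_zero, sub_im]
  rw [Real.cos_sub]
  nlinarith [Real.sin_sq_add_cos_sq a, Real.sin_sq_add_cos_sq b]

structure IsRegularCone {W : Type*} [Fintype W] (A : Matrix (Unit ⊕ W) (Unit ⊕ W) ℂ) (ℓ : ℝ) :
    Prop where
  apex_apex : A (.inl ()) (.inl ()) = 0
  apex_base : ∀ y, A (.inl ()) (.inr y) = 1
  base_apex : ∀ y, A (.inr y) (.inl ()) = 1
  sum_base_base : ∀ x, ∑ y, A (.inr x) (.inr y) = ℓ

namespace IsRegularCone

variable {W : Type*} [Fintype W] {A : Matrix (Unit ⊕ W) (Unit ⊕ W) ℂ} {ℓ : ℝ}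

theorem mulVec_eq_smul (hA : IsRegularCone A ℓ) {x μ : ℂ} (hμx : μ * x = Fintype.card W)
    (hxμ : x + ℓ = μ) :
    A *ᵥ Sum.elim (fun _ => x) 1 = μ • Sum.elim (fun _ => x) 1 := by
  ext (_ | y)
  · simp [mulVec, dotProduct, Fintype.sum_sum_type, hA.apex_apex, hA.apex_base, hμx]
  · simp [mulVec, dotProduct, Fintype.sum_sum_type, hA.base_apex, hA.sum_base_base, hxμ]

theorem exp_apex_apex [DecidableEq W] (hA : IsRegularCone A ℓ) {xp xm μp μm : ℝ}
    (hp : μp * xp = Fintype.card W) (hp' : xp + ℓ = μp)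
    (hm : μm * xm = Fintype.card W) (hm' : xm + ℓ = μm) (hne : xp ≠ xm) (t : ℝ) :
    NormedSpace.exp ((-I * t) • A) (.inl ()) (.inl ())
      = (xp * Complex.exp (↑(-(t * μp)) * I) - xm * Complex.exp (↑(-(t * μm)) * I))
        / (xp - xm) := by
  have heig : ∀ {x μ : ℝ}, μ * x = Fintype.card W → x + ℓ = μ →
      ((-I * t) • A) *ᵥ Sum.elim (fun _ => (x : ℂ)) 1
        = (↑(-(t * μ)) * I : ℂ) • Sum.elim (fun _ => (x : ℂ)) 1 := by
    intro x μ hμx hxμ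
    rw [smul_mulVec, hA.mulVec_eq_smul (μ := μ) (by exact_mod_cast hμx) (by exact_mod_cast hxμ),
      smul_smul]
    push_cast
    ring_nf
  have hne' : (xp : ℂ) - xm ≠ 0 := sub_ne_zero.mpr (by exact_mod_cast hne)
  have hsingle : Pi.single (.inl () : Unit ⊕ W) (1 : ℂ)
      = ((xp : ℂ) - xm)⁻¹
        • (Sum.elim (fun _ => (xp : ℂ)) 1 - Sum.elim (fun _ => (xm : ℂ)) 1) := by
    ext (_ | y) <;> simp [hne']
  rw [exp_apply_self_of_single_eq_smul_sub (heig hp hp') (heig hm hm') hsingle]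
  simp only [Sum.elim_inl]
  ring

theorem norm_exp_apex_sq [DecidableEq W] [Nonempty W] (hA : IsRegularCone A ℓ) (t : ℝ) :
    ‖NormedSpace.exp ((-I * t) • A) (.inl ()) (.inl ())‖ ^ 2
      = (ℓ ^ 2 + 2 * Fintype.card W) / (ℓ ^ 2 + 4 * Fintype.card W)
        + 2 * Fintype.card W / (ℓ ^ 2 + 4 * Fintype.card W)
          * Real.cos (√(ℓ ^ 2 + 4 * Fintype.card W) * t) := by
  set N : ℝ := (Fintype.card W : ℝ)
  set D := √(ℓ ^ 2 + 4 * N)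
  have hN : 0 < N := by simp [N, Fintype.card_pos]
  have hD : 0 < D := Real.sqrt_pos.mpr (by positivity)
  have hD2 : D ^ 2 = ℓ ^ 2 + 4 * N := Real.sq_sqrt (by positivity)
  -- μ± = (ℓ ± D)/2 are the roots of μ² - ℓμ - |W|, and x± = μ± - ℓ.
  rw [hA.exp_apex_apex (xp := (-ℓ + D) / 2) (xm := (-ℓ - D) / 2) (μp := (ℓ + D) / 2)
    (μm := (ℓ - D) / 2) (by linear_combination hD2 / 4) (by ring) (by linear_combination hD2 / 4)
    (by ring) (by linarith) t, norm_div, div_pow, norm_sq_mul_exp_sub_mul_exp, ← hD2]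
  have hsub : (((-ℓ + D) / 2 : ℝ) : ℂ) - (((-ℓ - D) / 2 : ℝ) : ℂ) = (D : ℂ) := by push_cast; ring
  rw [hsub, Complex.norm_of_nonneg hD.le,
    show -(t * ((ℓ + D) / 2)) - -(t * ((ℓ - D) / 2)) = -(D * t) by ring, Real.cos_neg]
  field_simp
  linear_combination (2 + 2 * Real.cos (D * t)) * hD2

theorem avgProb_apex [DecidableEq W] [Nonempty W] (hA : IsRegularCone A ℓ) :
    avgProb A (.inl ()) (.inl ())
      ((ℓ ^ 2 + 2 * Fintype.card W) / (ℓ ^ 2 + 4 * Fintype.card W)) := by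
  have hD : √(ℓ ^ 2 + 4 * Fintype.card W) ≠ 0 :=
    (Real.sqrt_pos.mpr (by positivity)).ne'
  unfold avgProb
  simp_rw [hA.norm_exp_apex_sq]
  exact tendsto_average_const_add_mul_cos _ _ _ hD

end IsRegularCone

theorem cone_not_uniform_mixing_general (n : ℕ) [NeZero n] (ℓ : ℕ)
    (AC : Matrix (ZMod n) (ZMod n) ℂ)
    (hreg : ∀ j : ZMod n, ∑ k : ZMod n, AC j k = (ℓ : ℂ))
    (A : Matrix (Unit ⊕ ZMod n) (Unit ⊕ ZMod n) ℂ)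
    (hapex : A (Sum.inl ()) (Sum.inl ()) = 0)
    (hcross1 : ∀ y : ZMod n, A (Sum.inl ()) (Sum.inr y) = 1)
    (hcross2 : ∀ y : ZMod n, A (Sum.inr y) (Sum.inl ()) = 1)
    (hC : ∀ x y : ZMod n, A (Sum.inr x) (Sum.inr y) = AC x y) :
    avgProb A (Sum.inl ()) (Sum.inl ())
        (1 - (1 / 2) * ((n : ℝ) / ((n : ℝ) + ((ℓ : ℝ) / 2) ^ 2))) ∧
    (1 : ℝ) / 2 ≤ 1 - (1 / 2) * ((n : ℝ) / ((n : ℝ) + ((ℓ : ℝ) / 2) ^ 2)) := by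
  have hA : IsRegularCone A ℓ := ⟨hapex, hcross1, hcross2, fun x => by simp [hC, hreg]⟩
  have hn : (0 : ℝ) < n := by exact_mod_cast Nat.pos_of_neZero n
  have hp : 1 - (1 / 2) * ((n : ℝ) / ((n : ℝ) + ((ℓ : ℝ) / 2) ^ 2))
      = (ℓ ^ 2 + 2 * Fintype.card (ZMod n)) / (ℓ ^ 2 + 4 * Fintype.card (ZMod n)) := by
    rw [ZMod.card]
    field_simp
    ring
  refine ⟨hp ▸ hA.avgProb_apex, ?_⟩
  rw [hp, ZMod.card, le_div_iff₀ (by positivity)]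
  nlinarith

/-- For the quantum walk on the cone `K_1 + C` over an `ℓ`-regular
circulant `C` of order `n`, started at the apex, the average probability of the apex is
`p̄_0 = 1 − (1/2)·n/(n + (ℓ/2)²) ≥ 1/2`, so the cone is never average uniform mixing. -/
theorem cone_not_uniform_mixing (n : ℕ) [NeZero n] (ℓ : ℕ)
    (c : ZMod n → Prop) [DecidablePred c]
    (hc0 : ¬ c 0) (hcsymm : ∀ k : ZMod n, c (-k) ↔ c k)
    (AC : Matrix (ZMod n) (ZMod n) ℂ)
    (hAC : ∀ j k : ZMod n, AC j k = if c (k - j) then 1 else 0)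
    (hreg : ∀ j : ZMod n, ∑ k : ZMod n, AC j k = (ℓ : ℂ))
    (A : Matrix (Unit ⊕ ZMod n) (Unit ⊕ ZMod n) ℂ)
    (hapex : A (Sum.inl ()) (Sum.inl ()) = 0)
    (hcross1 : ∀ y : ZMod n, A (Sum.inl ()) (Sum.inr y) = 1)
    (hcross2 : ∀ y : ZMod n, A (Sum.inr y) (Sum.inl ()) = 1)
    (hC : ∀ x y : ZMod n, A (Sum.inr x) (Sum.inr y) = AC x y) :
    avgProb A (Sum.inl ()) (Sum.inl ())
        (1 - (1 / 2) * ((n : ℝ) / ((n : ℝ) + ((ℓ : ℝ) / 2) ^ 2))) ∧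
    (1 : ℝ) / 2 ≤ 1 - (1 / 2) * ((n : ℝ) / ((n : ℝ) + ((ℓ : ℝ) / 2) ^ 2)) :=
  cone_not_uniform_mixing_general n ℓ AC hreg A hapex hcross1 hcross2 hC
end

section
/- Let G and H be circulants of degrees k, ℓ and orders m, n, and let Δ = (k−ℓ)² + 4mn. Assume the smaller join eigenvalue λ_− = ((k+ℓ) − √Δ)/2 does not belong to Sp(G)∖{k} or Sp(H)∖{ℓ}. For the continuous-time quantum walk on G + H starting at a vertex x₀ of G, the average probability of every vertex y of H equals 2/Δ. -/
open Matrix Complex Filter Real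

/-!
Translations of `H` are automorphisms of the join fixing `x₀`, so the amplitude
`⟨y| e^{-itA} |x₀⟩` is the same for all `y ∈ H`: it is `1/n` times the total amplitude on `H`.
Since the columns of the circulants `A_G` and `A_H` sum to `k` and `ℓ`, the row vectors `(n·𝟙_G, (λ - k)·𝟙_H)`
are left eigenvectors of `A` for both roots `λ₊, λ₋` of `(λ - k)(λ - ℓ) = mn`. Comparing the two
eigen-equations at `x₀` eliminates the amplitude on `G` and leaves
`⟨y| e^{-itA} |x₀⟩ = (e^{-itλ₊} - e^{-itλ₋}) / (λ₊ - λ₋)`, whose squared modulus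
`(2 - 2 cos (√Δ t)) / Δ` has time average `2 / Δ`.
-/

namespace Matrix

section Exp

variable {ι κ : Type*} [Fintype ι] [DecidableEq ι]

open scoped Norms.Operator in
theorem vecMul_exp_of_vecMul_eq_smul {M : Matrix ι ι ℂ} {v : ι → ℂ} {μ : ℂ}
    (h : v ᵥ* M = μ • v) : v ᵥ* NormedSpace.exp M = cexp μ • v := by
  have hpow (j : ℕ) : v ᵥ* M ^ j = μ ^ j • v := by
    induction j with
    | zero => simp
    | succ j ih => rw [pow_succ, ← vecMul_vecMul, ih, smul_vecMul, h, smul_smul, pow_succ]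
  let vecMulHom : Matrix ι ι ℂ →+ (ι → ℂ) := AddMonoidHom.mk' (v ᵥ* ·) fun _ _ => vecMul_add _ _ _
  have hseries := (NormedSpace.exp_series_hasSum_exp' (𝕂 := ℂ) M).map vecMulHom
    (continuous_const.matrix_vecMul continuous_id)
  have hscalar := (NormedSpace.exp_series_hasSum_exp' (𝕂 := ℂ) μ).smul_const v
  rw [← Complex.exp_eq_exp_ℂ] at hscalar
  refine hseries.unique (hscalar.congr_fun fun j => ?_)
  simp [vecMulHom, vecMul_smul, hpow, smul_smul]

open scoped Norms.Operator in
theorem exp_submatrix_equiv {𝕂 : Type*} [RCLike 𝕂] [Fintype κ] [DecidableEq κ]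
    (M : Matrix κ κ 𝕂) (e : ι ≃ κ) :
    NormedSpace.exp (M.submatrix e e) = (NormedSpace.exp M).submatrix e e :=
  (NormedSpace.map_exp (reindexAlgEquiv 𝕂 𝕂 e.symm) (continuous_id.matrix_submatrix _ _) M).symm

end Exp

section Circulant

variable {Γ α : Type*} [AddCommGroup Γ]

theorem sum_circulant_col_eq_sum_row [Fintype Γ] [AddCommMonoid α] (v : Γ → α) (i j : Γ) :
    ∑ i', circulant v i' j = ∑ j', circulant v i j' := by
  simp only [circulant_apply]
  exact (Fintype.sum_equiv (Equiv.subRight j) _ _ fun _ => rfl).trans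
    (Fintype.sum_equiv (Equiv.subLeft i) _ _ fun _ => rfl).symm

theorem submatrix_addRight_circulant (v : Γ → α) (c : Γ) :
    (circulant v).submatrix (Equiv.addRight c) (Equiv.addRight c) = circulant v := by
  ext i j
  simp [circulant_apply]

end Circulant

end Matrix

theorem norm_cexp_I_mul_sub_cexp_I_mul_sq (α β : ℝ) :
    ‖cexp (I * α) - cexp (I * β)‖ ^ 2 = 2 * (1 - Real.cos (α - β)) := by
  have hfactor : cexp (I * α) - cexp (I * β) = cexp (I * β) * (cexp (I * ↑(α - β)) - 1) := by
    rw [mul_sub, ← Complex.exp_add]; push_cast; ring_nf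
  rw [hfactor, norm_mul, norm_exp_I_mul_ofReal, one_mul, norm_exp_I_mul_ofReal_sub_one,
    Real.norm_eq_abs, sq_abs]
  have hcos := Real.cos_two_mul_eq_one_sub ((α - β) / 2)
  rw [mul_div_cancel₀ _ two_ne_zero] at hcos
  linear_combination 2 * hcos

theorem integral_mul_one_sub_cos (c : ℝ) {ω : ℝ} (hω : ω ≠ 0) (T : ℝ) :
    ∫ t in (0 : ℝ)..T, c * (1 - Real.cos (ω * t)) = c * (T - Real.sin (ω * T) / ω) := by
  rw [intervalIntegral.integral_const_mul, intervalIntegral.integral_sub intervalIntegrable_const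
    ((by fun_prop : Continuous fun t => Real.cos (ω * t)).intervalIntegrable _ _),
    intervalIntegral.integral_comp_mul_left (fun t => Real.cos t) hω, integral_cos]
  simp [div_eq_inv_mul]

theorem tendsto_average_mul_one_sub_cos (c : ℝ) {ω : ℝ} (hω : ω ≠ 0) :
    Tendsto (fun T => 1 / T * ∫ t in (0 : ℝ)..T, c * (1 - Real.cos (ω * t))) atTop (nhds c) := by
  have hsin : Tendsto (fun T => Real.sin (ω * T) * T⁻¹) atTop (nhds 0) :=
    isBoundedUnder_le_mul_tendsto_zero
      ⟨1, eventually_map.2 (Eventually.of_forall fun T => by simpa using Real.abs_sin_le_one _)⟩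
      tendsto_inv_atTop_zero
  have hlim := tendsto_const_nhds (x := c) |>.sub (hsin.const_mul (c / ω))
  rw [mul_zero, sub_zero] at hlim
  refine hlim.congr' ?_
  filter_upwards [eventually_ne_atTop 0] with T hT
  rw [integral_mul_one_sub_cos c hω]
  field_simp

theorem avgProb_of_apply_eq_exp_sub_exp {V : Type*} [Fintype V] [DecidableEq V]
    {A : Matrix V V ℂ} {s j : V} {a b : ℝ} (hab : a ≠ b)
    (h : ∀ t : ℝ, NormedSpace.exp ((-I * t) • A) j s
      = (cexp (-I * t * a) - cexp (-I * t * b)) / (a - b)) :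
    avgProb A s j (2 / (a - b) ^ 2) := by
  have hprob (t : ℝ) : ‖NormedSpace.exp ((-I * t) • A) j s‖ ^ 2
      = 2 / (a - b) ^ 2 * (1 - Real.cos ((b - a) * t)) := by
    have hexp (c : ℝ) : -I * t * c = I * ↑(-(t * c)) := by push_cast; ring
    rw [h, hexp, hexp, norm_div, div_pow, norm_cexp_I_mul_sub_cexp_I_mul_sq, ← ofReal_sub,
      norm_real, Real.norm_eq_abs, sq_abs]
    ring_nf
  simp only [avgProb, hprob]
  exact tendsto_average_mul_one_sub_cos _ (sub_ne_zero.2 hab.symm)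

section Join

variable {V W R : Type*}

def joinAdjMatrix [One R] (AG : Matrix V V R) (AH : Matrix W W R) : Matrix (V ⊕ W) (V ⊕ W) R :=
  fromBlocks AG (of fun _ _ => 1) (of fun _ _ => 1) AH

theorem joinAdjMatrix_submatrix_sumMap [One R] {V' W' : Type*} (AG : Matrix V V R)
    (AH : Matrix W W R) (f : V' → V) (g : W' → W) :
    (joinAdjMatrix AG AH).submatrix (Sum.map f g) (Sum.map f g)
      = joinAdjMatrix (AG.submatrix f f) (AH.submatrix g g) := by
  ext (i | i) (j | j) <;> rfl

variable [Fintype V] [Fintype W]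

theorem vecMul_joinAdjMatrix_eq_smul [CommRing R] {AG : Matrix V V R} {AH : Matrix W W R}
    {k ℓ μ : R} (hG : ∀ j, ∑ i, AG i j = k) (hH : ∀ j, ∑ i, AH i j = ℓ)
    (hμ : (μ - k) * (μ - ℓ) = Fintype.card V * Fintype.card W) :
    Sum.elim (fun _ => (Fintype.card W : R)) (fun _ => μ - k) ᵥ* joinAdjMatrix AG AH
      = μ • Sum.elim (fun _ => (Fintype.card W : R)) (fun _ => μ - k) := by
  ext (j | j) <;>
    simp only [joinAdjMatrix, vecMul, dotProduct, Fintype.sum_sum_type, Sum.elim_inl, Sum.elim_inr,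
      fromBlocks_apply₁₁, fromBlocks_apply₁₂, fromBlocks_apply₂₁, fromBlocks_apply₂₂, of_apply,
      mul_one, ← Finset.mul_sum, hG, hH, Finset.sum_const, Finset.card_univ, nsmul_eq_mul,
      Pi.smul_apply, smul_eq_mul]
  · ring
  · linear_combination -hμ

variable [DecidableEq V] [DecidableEq W] {AG : Matrix V V ℂ} {AH : Matrix W W ℂ} {k ℓ μ₁ μ₂ : ℂ}

theorem sum_exp_smul_joinAdjMatrix_apply_inr_inl (hG : ∀ j, ∑ i, AG i j = k)
    (hH : ∀ j, ∑ i, AH i j = ℓ) (hμ₁ : (μ₁ - k) * (μ₁ - ℓ) = Fintype.card V * Fintype.card W)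
    (hμ₂ : (μ₂ - k) * (μ₂ - ℓ) = Fintype.card V * Fintype.card W) (c : ℂ) (x : V) :
    (μ₁ - μ₂) * ∑ r, NormedSpace.exp (c • joinAdjMatrix AG AH) (Sum.inr r) (Sum.inl x)
      = Fintype.card W * (cexp (c * μ₁) - cexp (c * μ₂)) := by
  have heigen {μ : ℂ} (hμ : (μ - k) * (μ - ℓ) = Fintype.card V * Fintype.card W) :
      Fintype.card W * ∑ i, NormedSpace.exp (c • joinAdjMatrix AG AH) (Sum.inl i) (Sum.inl x)
        + (μ - k) * ∑ r, NormedSpace.exp (c • joinAdjMatrix AG AH) (Sum.inr r) (Sum.inl x)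
        = Fintype.card W * cexp (c * μ) := by
    have hvec := vecMul_exp_of_vecMul_eq_smul (M := c • joinAdjMatrix AG AH) (μ := c * μ)
      (by rw [vecMul_smul, vecMul_joinAdjMatrix_eq_smul hG hH hμ, smul_smul])
    simpa [vecMul, dotProduct, Fintype.sum_sum_type, Finset.mul_sum, mul_comm]
      using congr_fun hvec (Sum.inl x)
  linear_combination heigen hμ₁ - heigen hμ₂

theorem exp_smul_joinAdjMatrix_apply_inr_inl (hG : ∀ j, ∑ i, AG i j = k)
    (hH : ∀ j, ∑ i, AH i j = ℓ) (hAH : ∀ r r', ∃ σ : W ≃ W, σ r = r' ∧ AH.submatrix σ σ = AH)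
    (hμ₁ : (μ₁ - k) * (μ₁ - ℓ) = Fintype.card V * Fintype.card W)
    (hμ₂ : (μ₂ - k) * (μ₂ - ℓ) = Fintype.card V * Fintype.card W) (hμ : μ₁ ≠ μ₂)
    (c : ℂ) (x : V) (y : W) :
    NormedSpace.exp (c • joinAdjMatrix AG AH) (Sum.inr y) (Sum.inl x)
      = (cexp (c * μ₁) - cexp (c * μ₂)) / (μ₁ - μ₂) := by
  have hconst (r : W) : NormedSpace.exp (c • joinAdjMatrix AG AH) (Sum.inr r) (Sum.inl x)
      = NormedSpace.exp (c • joinAdjMatrix AG AH) (Sum.inr y) (Sum.inl x) := by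
    obtain ⟨σ, hσ, hσAH⟩ := hAH r y
    have hJ : (joinAdjMatrix AG AH).submatrix (Sum.map id σ) (Sum.map id σ)
        = joinAdjMatrix AG AH := by
      rw [joinAdjMatrix_submatrix_sumMap, hσAH, submatrix_id_id]
    have hE := exp_submatrix_equiv (c • joinAdjMatrix AG AH) (Equiv.sumCongr (.refl V) σ)
    change NormedSpace.exp (c • (joinAdjMatrix AG AH).submatrix (Sum.map id σ) (Sum.map id σ))
      = _ at hE
    rw [hJ] at hE
    simpa [hσ] using congr_fun₂ hE (Sum.inr r) (Sum.inl x)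
  have hsum := sum_exp_smul_joinAdjMatrix_apply_inr_inl hG hH hμ₁ hμ₂ c x
  simp only [hconst, Finset.sum_const, Finset.card_univ, nsmul_eq_mul] at hsum
  have hW : (Fintype.card W : ℂ) ≠ 0 := Nat.cast_ne_zero.2 (Fintype.card_pos_iff.2 ⟨y⟩).ne'
  rw [eq_div_iff (sub_ne_zero.2 hμ)]
  exact mul_left_cancel₀ hW (by linear_combination hsum)

theorem avgProb_joinAdjMatrix_inl_inr {k ℓ : ℝ} (hG : ∀ j, ∑ i, AG i j = k)
    (hH : ∀ j, ∑ i, AH i j = ℓ) (hAH : ∀ r r', ∃ σ : W ≃ W, σ r = r' ∧ AH.submatrix σ σ = AH)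
    (x : V) (y : W) :
    avgProb (joinAdjMatrix AG AH) (Sum.inl x) (Sum.inr y)
      (2 / ((k - ℓ) ^ 2 + 4 * Fintype.card V * Fintype.card W)) := by
  set Δ := (k - ℓ) ^ 2 + 4 * Fintype.card V * Fintype.card W
  have hΔpos : 0 < Δ := by
    have hV : (0 : ℝ) < Fintype.card V := Nat.cast_pos.2 (Fintype.card_pos_iff.2 ⟨x⟩)
    have hW : (0 : ℝ) < Fintype.card W := Nat.cast_pos.2 (Fintype.card_pos_iff.2 ⟨y⟩)
    positivity
  set s := √Δ
  have hs : s ^ 2 = Δ := sq_sqrt hΔpos.le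
  have hroot (r : ℝ) (hr : r ^ 2 = Δ) :
      ((((k + ℓ + r) / 2 : ℝ) : ℂ) - k) * ((((k + ℓ + r) / 2 : ℝ) : ℂ) - ℓ)
        = Fintype.card V * Fintype.card W := by
    exact_mod_cast (by linear_combination hr / 4 :
      ((k + ℓ + r) / 2 - k) * ((k + ℓ + r) / 2 - ℓ) = (Fintype.card V * Fintype.card W : ℝ))
  have hne : (k + ℓ + s) / 2 ≠ (k + ℓ + -s) / 2 := by
    have := sqrt_pos.2 hΔpos; intro h; linarith
  rw [show Δ = ((k + ℓ + s) / 2 - (k + ℓ + -s) / 2) ^ 2 by rw [← hs]; ring]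
  exact avgProb_of_apply_eq_exp_sub_exp hne fun t => by
    exact_mod_cast exp_smul_joinAdjMatrix_apply_inr_inl hG hH hAH (hroot s hs)
      (hroot (-s) (by rw [neg_sq, hs])) (by exact_mod_cast hne) (-I * t) x y

end Join

theorem join_avg_prob_on_H_general (m n : ℕ) [NeZero m] [NeZero n] (k ℓ : ℕ)
    (g : ZMod m → Prop) [DecidablePred g]
    (h : ZMod n → Prop) [DecidablePred h]
    (AG : Matrix (ZMod m) (ZMod m) ℝ) (hAG : ∀ i j, AG i j = if g (j - i) then 1 else 0)
    (AH : Matrix (ZMod n) (ZMod n) ℝ) (hAH : ∀ i j, AH i j = if h (j - i) then 1 else 0)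
    (hdegG : ∀ i : ZMod m, ∑ j : ZMod m, AG i j = (k : ℝ))
    (hdegH : ∀ i : ZMod n, ∑ j : ZMod n, AH i j = (ℓ : ℝ))
    (Δ : ℝ)
    (hΔ : Δ = ((k : ℝ) - ℓ) ^ 2 + 4 * m * n)
    (A : Matrix (ZMod m ⊕ ZMod n) (ZMod m ⊕ ZMod n) ℝ)
    (hGG : ∀ i j : ZMod m, A (Sum.inl i) (Sum.inl j) = AG i j)
    (hHH : ∀ i j : ZMod n, A (Sum.inr i) (Sum.inr j) = AH i j)
    (hGH : ∀ (i : ZMod m) (j : ZMod n), A (Sum.inl i) (Sum.inr j) = 1)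
    (hHG : ∀ (i : ZMod n) (j : ZMod m), A (Sum.inr i) (Sum.inl j) = 1)
    (x₀ : ZMod m) :
    ∀ y : ZMod n, avgProb (A.map Complex.ofReal) (Sum.inl x₀) (Sum.inr y) (2 / Δ) := by
  intro y
  have hGc : AG.map ofReal = circulant fun d => ((if g (-d) then 1 else 0 : ℝ) : ℂ) := by
    ext i j; simp [hAG, circulant_apply]
  have hHc : AH.map ofReal = circulant fun d => ((if h (-d) then 1 else 0 : ℝ) : ℂ) := by
    ext i j; simp [hAH, circulant_apply]
  have hcolG (j : ZMod m) : ∑ i, AG.map ofReal i j = (k : ℝ) := by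
    rw [hGc, sum_circulant_col_eq_sum_row _ 0 j, ← hGc]
    simpa using congr_arg ofReal (hdegG 0)
  have hcolH (j : ZMod n) : ∑ i, AH.map ofReal i j = (ℓ : ℝ) := by
    rw [hHc, sum_circulant_col_eq_sum_row _ 0 j, ← hHc]
    simpa using congr_arg ofReal (hdegH 0)
  have htransH (r r' : ZMod n) :
      ∃ σ : ZMod n ≃ ZMod n, σ r = r' ∧ (AH.map ofReal).submatrix σ σ = AH.map ofReal :=
    ⟨Equiv.addRight (r' - r), by simp, by rw [hHc, submatrix_addRight_circulant]⟩
  have hA : A.map ofReal = joinAdjMatrix (AG.map ofReal) (AH.map ofReal) := by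
    ext (i | i) (j | j) <;> simp [joinAdjMatrix, hGG, hHH, hGH, hHG]
  have hprob := avgProb_joinAdjMatrix_inl_inr hcolG hcolH htransH x₀ y
  rwa [ZMod.card, ZMod.card, ← hΔ, ← hA] at hprob

/-- For circulants `G`, `H` of degrees `k`, `ℓ` and orders `m`, `n`, with
`Δ = (k−ℓ)² + 4mn`, if the smaller join eigenvalue `λ₋ = ((k+ℓ)−√Δ)/2` is not in
`Sp(G)∖{k}` nor in `Sp(H)∖{ℓ}`, then for the quantum walk on `G + H` started at a vertex
`x₀` of `G`, the average probability of every vertex of `H` equals `2/Δ`. -/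
theorem join_avg_prob_on_H (m n : ℕ) [NeZero m] [NeZero n] (k ℓ : ℕ)
    (g : ZMod m → Prop) [DecidablePred g] (hg0 : ¬ g 0) (hgs : ∀ d, g (-d) ↔ g d)
    (h : ZMod n → Prop) [DecidablePred h] (hh0 : ¬ h 0) (hhs : ∀ d, h (-d) ↔ h d)
    (AG : Matrix (ZMod m) (ZMod m) ℝ) (hAG : ∀ i j, AG i j = if g (j - i) then 1 else 0)
    (AH : Matrix (ZMod n) (ZMod n) ℝ) (hAH : ∀ i j, AH i j = if h (j - i) then 1 else 0)
    (hdegG : ∀ i : ZMod m, ∑ j : ZMod m, AG i j = (k : ℝ))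
    (hdegH : ∀ i : ZMod n, ∑ j : ZMod n, AH i j = (ℓ : ℝ))
    (μ : ZMod m → ℝ)
    (hμ : ∀ j : ZMod m, μ j = ∑ d : ZMod m, AG 0 d * Real.cos (2 * Real.pi * j.val * d.val / m))
    (ν : ZMod n → ℝ)
    (hν : ∀ j : ZMod n, ν j = ∑ d : ZMod n, AH 0 d * Real.cos (2 * Real.pi * j.val * d.val / n))
    (Δ lamMinus : ℝ)
    (hΔ : Δ = ((k : ℝ) - ℓ) ^ 2 + 4 * m * n)
    (hlam : lamMinus = (((k : ℝ) + ℓ) - Real.sqrt Δ) / 2)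
    (havoidG : ∀ j : ZMod m, j ≠ 0 → μ j ≠ lamMinus)
    (havoidH : ∀ j : ZMod n, j ≠ 0 → ν j ≠ lamMinus)
    (A : Matrix (ZMod m ⊕ ZMod n) (ZMod m ⊕ ZMod n) ℝ)
    (hGG : ∀ i j : ZMod m, A (Sum.inl i) (Sum.inl j) = AG i j)
    (hHH : ∀ i j : ZMod n, A (Sum.inr i) (Sum.inr j) = AH i j)
    (hGH : ∀ (i : ZMod m) (j : ZMod n), A (Sum.inl i) (Sum.inr j) = 1)
    (hHG : ∀ (i : ZMod n) (j : ZMod m), A (Sum.inr i) (Sum.inl j) = 1)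
    (x₀ : ZMod m) :
    ∀ y : ZMod n, avgProb (A.map Complex.ofReal) (Sum.inl x₀) (Sum.inr y) (2 / Δ) :=
  join_avg_prob_on_H_general m n k ℓ g h AG hAG AH hAH hdegG hdegH Δ hΔ A hGG hHH hGH hHG x₀
end

section
/- For the continuous-time quantum walk on the path P_m starting at endpoint vertex 1, the average probability of each vertex x satisfies p̄_x = (4/(m+1)²) Σ_{j=1}^m sin²(jπ/(m+1)) sin²(jxπ/(m+1)) ≤ 2/(m+1) + 4/(m+1)², hence P_m is average uniform mixing. -/
open Matrix Complex Filter Real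

/-! The sine matrix `U x j = √(2/(m+1)) sin((x+1)(j+1)π/(m+1))` is symmetric, satisfies
`U * U = 1` (a telescoping cosine sum) and diagonalizes the adjacency matrix of the path, with the
distinct eigenvalues `2 cos((j+1)π/(m+1))` (the three-term recurrence of `sin`). Hence
`exp(-itA) x s = ∑ j, U x j * U j s * exp(-itλⱼ)`, whose squared modulus is a sum of terms
`cⱼ cₖ cos(t(λⱼ - λₖ))`; the time average kills every term with `j ≠ k` and leaves
`∑ j, (U x j * U j s)²`. Finally `(U j s)² ≤ 2/(m+1)` and the rows of `U` are unit vectors,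
so this is at most `2/(m+1)`. -/

noncomputable def timeAverage (f : ℝ → ℝ) (T : ℝ) : ℝ := 1 / T * ∫ t in (0 : ℝ)..T, f t

theorem timeAverage_sum {ι : Type*} (s : Finset ι) (f : ι → ℝ → ℝ)
    (hf : ∀ i ∈ s, Continuous (f i)) (T : ℝ) :
    timeAverage (fun t => ∑ i ∈ s, f i t) T = ∑ i ∈ s, timeAverage (f i) T := by
  rw [timeAverage, intervalIntegral.integral_finsetSum
    fun i hi => (hf i hi).intervalIntegrable _ _, Finset.mul_sum]
  rfl

theorem timeAverage_const_mul (c : ℝ) (f : ℝ → ℝ) (T : ℝ) :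
    timeAverage (fun t => c * f t) T = c * timeAverage f T := by
  rw [timeAverage, timeAverage, intervalIntegral.integral_const_mul, mul_left_comm]

theorem tendsto_timeAverage_cos_mul (ω : ℝ) :
    Tendsto (timeAverage fun t => Real.cos (t * ω)) atTop (nhds (if ω = 0 then 1 else 0)) := by
  split_ifs with hω
  · refine tendsto_const_nhds.congr' ?_
    filter_upwards [eventually_ne_atTop 0] with T hT
    simp [timeAverage, hω, hT]
  · have hint :
        (timeAverage fun t => Real.cos (t * ω)) = fun T => T⁻¹ * (Real.sin (T * ω) / ω) := by
      ext T
      rw [timeAverage, intervalIntegral.integral_comp_mul_right _ hω, integral_cos]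
      simp [div_eq_inv_mul]
    rw [hint]
    refine tendsto_inv_atTop_zero.zero_mul_isBoundedUnder_le
      (isBoundedUnder_of ⟨1 / |ω|, fun T => ?_⟩)
    rw [Function.comp_apply, Real.norm_eq_abs, abs_div]
    exact div_le_div_of_nonneg_right (Real.abs_sin_le_one _) (abs_nonneg ω)

theorem tendsto_timeAverage_sum_mul_cos {ι : Type*} [Fintype ι] (c lam : ι → ℝ)
    (hlam : Function.Injective lam) :
    Tendsto (timeAverage fun t => ∑ j, ∑ k, c j * c k * Real.cos (t * (lam j - lam k))) atTop
      (nhds (∑ j, c j ^ 2)) := by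
  have hlim : ∑ j, c j ^ 2 = ∑ j, ∑ k, c j * c k * (if lam j - lam k = 0 then 1 else 0) := by
    refine Finset.sum_congr rfl fun j _ => ?_
    rw [Finset.sum_eq_single j (fun k _ hkj => ?_) (by simp), sub_self, if_pos rfl, mul_one, sq]
    rw [if_neg (sub_ne_zero.mpr (hlam.ne hkj.symm)), mul_zero]
  have hsum : (timeAverage fun t => ∑ j, ∑ k, c j * c k * Real.cos (t * (lam j - lam k)))
      = fun T => ∑ j, ∑ k, c j * c k * timeAverage (fun t => Real.cos (t * (lam j - lam k))) T := by
    ext T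
    rw [timeAverage_sum _ _ fun j _ => by fun_prop]
    refine Finset.sum_congr rfl fun j _ => ?_
    rw [timeAverage_sum _ _ fun k _ => by fun_prop]
    exact Finset.sum_congr rfl fun k _ => timeAverage_const_mul _ _ _
  rw [hsum, hlim]
  exact tendsto_finsetSum _ fun j _ => tendsto_finsetSum _ fun k _ =>
    (tendsto_timeAverage_cos_mul _).const_mul _

theorem norm_sum_mul_exp_sq {ι : Type*} [Fintype ι] (c θ : ι → ℝ) :
    ‖∑ j, (c j : ℂ) * Complex.exp (θ j * I)‖ ^ 2
      = ∑ j, ∑ k, c j * c k * Real.cos (θ j - θ k) := by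
  rw [Complex.sq_norm, Complex.normSq_apply, Complex.re_sum, Complex.im_sum]
  simp only [re_ofReal_mul, im_ofReal_mul, exp_ofReal_mul_I_re, exp_ofReal_mul_I_im,
    Finset.sum_mul_sum, ← Finset.sum_add_distrib, Real.cos_sub]
  exact Finset.sum_congr rfl fun j _ => Finset.sum_congr rfl fun k _ => by ring

theorem exp_smul_apply_of_mul_eq_mul_diagonal {ι : Type*} [Fintype ι] [DecidableEq ι]
    {A U V : Matrix ι ι ℂ} {d : ι → ℂ} (hVU : V * U = 1) (hAU : A * U = U * diagonal d)
    (z : ℂ) (i k : ι) :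
    NormedSpace.exp (z • A) i k = ∑ j, U i j * V j k * Complex.exp (z * d j) := by
  have hA : z • A = U * diagonal (z • d) * U⁻¹ := by
    rw [inv_eq_left_inv hVU, diagonal_smul, Matrix.mul_smul, Matrix.smul_mul, ← hAU, mul_assoc,
      mul_eq_one_comm.mp hVU, mul_one]
  have hexp : NormedSpace.exp (z • d) = fun j => Complex.exp (z * d j) := by
    ext j
    simp [← Complex.exp_eq_exp_ℂ]
  rw [hA, Matrix.exp_conj _ _ (IsUnit.of_mul_eq_one_right V hVU), inv_eq_left_inv hVU,
    exp_diagonal, hexp, mul_apply]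
  simp only [mul_diagonal]
  exact Finset.sum_congr rfl fun j _ => by ring

theorem avgProb_of_mul_eq_mul_diagonal {ι : Type*} [Fintype ι] [DecidableEq ι]
    {A : Matrix ι ι ℂ} {U V : Matrix ι ι ℝ} {lam : ι → ℝ} (hlam : Function.Injective lam)
    (hVU : V * U = 1)
    (hAU : A * U.map ofRealHom = U.map ofRealHom * diagonal fun j => (lam j : ℂ)) (s x : ι) :
    avgProb A s x (∑ j, (U x j * V j s) ^ 2) := by
  have hVU' : V.map ofRealHom * U.map ofRealHom = 1 := by
    rw [← Matrix.map_mul, hVU, Matrix.map_one _ (map_zero _) (map_one _)]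
  have hprob : ∀ t : ℝ, ‖NormedSpace.exp ((-I * t) • A) x s‖ ^ 2
      = ∑ j, ∑ k, U x j * V j s * (U x k * V k s) * Real.cos (t * (lam j - lam k)) := by
    intro t
    rw [exp_smul_apply_of_mul_eq_mul_diagonal hVU' hAU]
    have hterm : ∀ j, U.map ofRealHom x j * V.map ofRealHom j s * Complex.exp (-I * t * lam j)
        = ((U x j * V j s : ℝ) : ℂ) * Complex.exp ((-(t * lam j) : ℝ) * I) := fun j => by
      simp only [map_apply, ofRealHom_eq_coe]
      push_cast
      ring_nf
    simp only [hterm, norm_sum_mul_exp_sq]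
    refine Finset.sum_congr rfl fun j _ => Finset.sum_congr rfl fun k _ => ?_
    rw [← Real.cos_neg]
    ring_nf
  unfold avgProb
  simp only [hprob]
  exact tendsto_timeAverage_sum_mul_cos (fun j => U x j * V j s) lam hlam

-- Telescoping: `2 sin(θ/2) cos(jθ) = sin((j + 1/2)θ) - sin((j - 1/2)θ)`.
theorem sum_range_cos_mul {θ : ℝ} (N : ℕ) (hθ : Real.sin (θ / 2) ≠ 0)
    (hN : Real.sin (N * θ) = 0) :
    ∑ j ∈ Finset.range N, Real.cos (j * θ) = (1 - Real.cos (N * θ)) / 2 := by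
  have htel : 2 * Real.sin (θ / 2) * ∑ j ∈ Finset.range N, Real.cos (j * θ)
      = Real.sin (N * θ - θ / 2) - Real.sin ((0 : ℕ) * θ - θ / 2) := by
    rw [Finset.mul_sum, ← Finset.sum_range_sub (fun j : ℕ => Real.sin (j * θ - θ / 2))]
    refine Finset.sum_congr rfl fun j _ => ?_
    rw [Real.two_mul_sin_mul_cos, sub_eq_add_neg (Real.sin _), ← Real.sin_neg]
    push_cast
    ring_nf
  simp only [Real.sin_sub, hN, Nat.cast_zero, zero_mul, zero_sub, Real.sin_neg] at htel
  apply mul_left_cancel₀ hθ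
  linear_combination htel / 2

theorem sum_cos_succ_mul_int_mul_pi_div {m : ℕ} {c : ℤ} (hc : ¬ 2 * ((m : ℤ) + 1) ∣ c) :
    ∑ j : Fin m, Real.cos ((j + 1) * (c * π / (m + 1))) = (1 - Real.cos (c * π)) / 2 - 1 := by
  have hθ : Real.sin (c * π / (m + 1) / 2) ≠ 0 := by
    rw [Ne, Real.sin_eq_zero_iff]
    rintro ⟨n, hn⟩
    refine hc ⟨n, ?_⟩
    have : (c : ℝ) = 2 * ((m : ℝ) + 1) * n := by
      field_simp at hn
      linarith
    exact_mod_cast this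
  have hN : ((m + 1 : ℕ) : ℝ) * (c * π / (m + 1)) = c * π := by
    push_cast; field_simp
  have h := sum_range_cos_mul (m + 1) hθ (by rw [hN, Real.sin_int_mul_pi])
  rw [Finset.sum_range_succ', ← Fin.sum_univ_eq_sum_range, hN] at h
  push_cast at h
  simp only [zero_mul, Real.cos_zero] at h
  linarith

noncomputable def pathEigenbasis (m : ℕ) : Matrix (Fin m) (Fin m) ℝ :=
  Matrix.of fun x j => √(2 / (m + 1)) * Real.sin ((x + 1) * (j + 1) * π / (m + 1))

theorem pathEigenbasis_transpose (m : ℕ) : (pathEigenbasis m)ᵀ = pathEigenbasis m := by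
  ext x j
  simp only [transpose_apply, pathEigenbasis, of_apply]
  ring_nf

theorem sq_sqrt_two_div_succ (m : ℕ) : √(2 / ((m : ℝ) + 1)) ^ 2 = 2 / (m + 1) :=
  Real.sq_sqrt (by positivity)

theorem pathEigenbasis_mul_self_apply (m : ℕ) (a b : Fin m) :
    (pathEigenbasis m * pathEigenbasis m) a b =
      (∑ j : Fin m, Real.cos ((j + 1) * ((((a : ℤ) - b : ℤ) : ℝ) * π / (m + 1)))
        - ∑ j : Fin m, Real.cos ((j + 1) * ((((a : ℤ) + b + 2 : ℤ) : ℝ) * π / (m + 1))))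
        / (m + 1) := by
  rw [mul_apply, ← Finset.sum_sub_distrib, Finset.sum_div]
  refine Finset.sum_congr rfl fun j _ => ?_
  have hprod : ∀ u v : ℝ, 2 * (Real.sin u * Real.sin v) = Real.cos (u - v) - Real.cos (u + v) := by
    intro u v; rw [Real.cos_sub, Real.cos_add]; ring
  simp only [pathEigenbasis, of_apply]
  rw [mul_mul_mul_comm, ← sq, sq_sqrt_two_div_succ, div_mul_eq_mul_div, hprod]
  push_cast
  ring_nf

theorem pathEigenbasis_mul_self (m : ℕ) : pathEigenbasis m * pathEigenbasis m = 1 := by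
  ext a b
  have hm : ((m : ℝ) + 1) ≠ 0 := by positivity
  have ha := a.isLt
  have hb := b.isLt
  have hsum : ¬ 2 * ((m : ℤ) + 1) ∣ ((a : ℤ) + b + 2) := by
    rintro ⟨k, hk⟩
    rcases le_or_gt k 0 with h | h <;> nlinarith
  have hcos_sum : Real.cos ((((a : ℤ) + b + 2 : ℤ) : ℝ) * π)
      = Real.cos ((((a : ℤ) - b : ℤ) : ℝ) * π) := by
    rw [← Real.cos_add_int_mul_two_pi ((((a : ℤ) - b : ℤ) : ℝ) * π) (b + 1)]
    push_cast
    ring_nf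
  rw [pathEigenbasis_mul_self_apply, sum_cos_succ_mul_int_mul_pi_div hsum, hcos_sum, one_apply]
  split_ifs with hab
  · subst hab
    simp only [sub_self, Int.cast_zero, zero_mul, zero_div, mul_zero, Real.cos_zero,
      Finset.sum_const, Finset.card_univ, Fintype.card_fin, nsmul_eq_mul, mul_one]
    field_simp
    ring
  · have hdiff : ¬ 2 * ((m : ℤ) + 1) ∣ ((a : ℤ) - b) := by
      have : (a : ℤ) ≠ b := fun h => hab (Fin.ext (by exact_mod_cast h))
      rintro ⟨k, hk⟩
      rcases lt_trichotomy k 0 with h | h | h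
      · nlinarith
      · subst h; omega
      · nlinarith
    rw [sum_cos_succ_mul_int_mul_pi_div hdiff, sub_self, zero_div]

theorem sq_pathEigenbasis_apply_le (m : ℕ) (i j : Fin m) :
    pathEigenbasis m i j ^ 2 ≤ 2 / (m + 1) := by
  rw [pathEigenbasis, of_apply, mul_pow, sq_sqrt_two_div_succ]
  exact mul_le_of_le_one_right (by positivity) (Real.sin_sq_le_one _)

theorem sum_sq_pathEigenbasis_apply (m : ℕ) (x : Fin m) :
    ∑ j, pathEigenbasis m x j ^ 2 = 1 := by
  have h := congr_fun₂ (pathEigenbasis_mul_self m) x x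
  nth_rw 2 [← pathEigenbasis_transpose] at h
  simpa only [mul_apply, transpose_apply, one_apply_eq, ← sq] using h

theorem sum_sq_pathEigenbasis_mul_le (m : ℕ) (x s : Fin m) :
    ∑ j, (pathEigenbasis m x j * pathEigenbasis m j s) ^ 2 ≤ 2 / (m + 1) :=
  calc ∑ j, (pathEigenbasis m x j * pathEigenbasis m j s) ^ 2
      ≤ ∑ j, pathEigenbasis m x j ^ 2 * (2 / (m + 1)) := Finset.sum_le_sum fun j _ => by
        rw [mul_pow]
        exact mul_le_mul_of_nonneg_left (sq_pathEigenbasis_apply_le m j s) (sq_nonneg _)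
    _ = 2 / (m + 1) := by rw [← Finset.sum_mul, sum_sq_pathEigenbasis_apply, one_mul]

instance (m : ℕ) : DecidableRel (SimpleGraph.pathGraph m).Adj :=
  fun _ _ => decidable_of_iff _ SimpleGraph.pathGraph_adj.symm

-- The boundary values `g 0 = g (m + 1) = 0` make the endpoint rows look like the inner ones.
theorem sum_pathGraph_adjMatrix_apply_mul {R : Type*} [NonAssocSemiring R] {m : ℕ} (g : ℕ → R)
    (h0 : g 0 = 0) (hm : g (m + 1) = 0) (x : Fin m) :
    ∑ k : Fin m, (SimpleGraph.pathGraph m).adjMatrix R x k * g (k + 1) = g x + g (x + 2) := by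
  have hsplit : ∀ k : Fin m, (SimpleGraph.pathGraph m).adjMatrix R x k * g (k + 1)
      = (if (x : ℕ) + 1 = k then g (k + 1) else 0)
        + (if (k : ℕ) + 1 = x then g (k + 1) else 0) := by
    intro k
    simp only [SimpleGraph.adjMatrix_apply, SimpleGraph.pathGraph_adj]
    split_ifs <;> first | omega | simp
  have hup : ∑ k ∈ Finset.range m, (if (x : ℕ) + 1 = k then g (k + 1) else 0) = g (x + 2) := by
    rw [Finset.sum_ite_eq]
    split_ifs with h
    · rfl
    · rw [show (x : ℕ) + 2 = m + 1 by simp at h; omega, hm]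
  have hdown : ∑ k ∈ Finset.range m, (if k + 1 = (x : ℕ) then g (k + 1) else 0) = g x := by
    have := Finset.sum_range_succ' (fun k => if k = (x : ℕ) then g k else 0) m
    rw [Finset.sum_ite_eq', if_pos (by simp)] at this
    rw [this]
    split_ifs with h
    · rw [← h, h0, add_zero]
    · rw [add_zero]
  simp only [hsplit, Finset.sum_add_distrib]
  rw [Fin.sum_univ_eq_sum_range (fun k => if (x : ℕ) + 1 = k then g (k + 1) else 0),
    Fin.sum_univ_eq_sum_range (fun k => if k + 1 = (x : ℕ) then g (k + 1) else 0), hup, hdown,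
    add_comm]

noncomputable def pathEigenvalue (m : ℕ) (j : Fin m) : ℝ := 2 * Real.cos ((j + 1) * π / (m + 1))

theorem pathGraph_adjMatrix_mul_pathEigenbasis (m : ℕ) :
    (SimpleGraph.pathGraph m).adjMatrix ℝ * pathEigenbasis m
      = pathEigenbasis m * diagonal (pathEigenvalue m) := by
  ext x j
  set β : ℝ := (j + 1) * π / (m + 1)
  set g : ℕ → ℝ := fun n => √(2 / (m + 1)) * Real.sin (n * β)
  have hU : ∀ k : Fin m, pathEigenbasis m k j = g (k + 1) := by
    intro k
    simp only [pathEigenbasis, of_apply, g, β]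
    push_cast
    ring_nf
  have hgm : g (m + 1) = 0 := by
    have : ((m + 1 : ℕ) : ℝ) * β = ((j : ℕ) + 1 : ℕ) * π := by
      simp only [β]; push_cast; field_simp
    simp only [g, this, Real.sin_nat_mul_pi, mul_zero]
  rw [mul_apply, mul_diagonal, hU x]
  simp only [hU]
  rw [sum_pathGraph_adjMatrix_apply_mul g (by simp [g]) hgm]
  simp only [g, pathEigenvalue]
  push_cast
  have h₁ := Real.sin_add (((x : ℕ) + 1) * β) β
  have h₂ := Real.sin_sub (((x : ℕ) + 1) * β) β
  rw [show ((x : ℕ) + 1) * β + β = ((x : ℕ) + 2) * β by ring] at h₁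
  rw [show ((x : ℕ) + 1) * β - β = (x : ℕ) * β by ring] at h₂
  rw [h₁, h₂]
  ring

theorem pathEigenvalue_injective (m : ℕ) : Function.Injective (pathEigenvalue m) := by
  intro j k h
  have hmem : ∀ a : Fin m, ((a : ℝ) + 1) * π / (m + 1) ∈ Set.Icc 0 π := fun a => by
    refine ⟨by positivity, div_le_of_le_mul₀ (by positivity) pi_pos.le ?_⟩
    have : (a : ℝ) + 1 ≤ m := by exact_mod_cast a.isLt
    nlinarith [pi_pos]
  have h' := Real.injOn_cos (hmem j) (hmem k) (by simpa [pathEigenvalue] using h)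
  field_simp at h'
  exact Fin.ext (by exact_mod_cast add_right_cancel h')

/-- For the quantum walk on the path `P_m` started at the endpoint
(vertex 1), the average probability at each vertex `x` equals
`(4/(m+1)²) Σ_{j=1}^m sin²(jπ/(m+1)) sin²(jxπ/(m+1)) ≤ 2/(m+1) + 4/(m+1)²`;
hence `P_m` is average uniform mixing.
(Vertices `1,...,m` are represented by `Fin m` via `x ↦ x+1`.) -/
theorem path_average_uniform_mixing (m : ℕ) (hm : 0 < m)
    (A : Matrix (Fin m) (Fin m) ℂ)
    (hA : ∀ j k : Fin m,
      A j k = if (j.val + 1 = k.val ∨ k.val + 1 = j.val) then 1 else 0)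
    (x : Fin m) :
    avgProb A ⟨0, hm⟩ x
        ((4 / ((m : ℝ) + 1) ^ 2) * ∑ j : Fin m,
          Real.sin ((j.val + 1) * Real.pi / (m + 1)) ^ 2
            * Real.sin ((j.val + 1) * (x.val + 1) * Real.pi / (m + 1)) ^ 2) ∧
    (4 / ((m : ℝ) + 1) ^ 2) * (∑ j : Fin m,
          Real.sin ((j.val + 1) * Real.pi / (m + 1)) ^ 2
            * Real.sin ((j.val + 1) * (x.val + 1) * Real.pi / (m + 1)) ^ 2)
      ≤ 2 / ((m : ℝ) + 1) + 4 / ((m : ℝ) + 1) ^ 2 := by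
  set U := pathEigenbasis m
  have hA' : A = ((SimpleGraph.pathGraph m).adjMatrix ℝ).map ofRealHom := by
    ext j k
    rw [hA, map_apply, SimpleGraph.adjMatrix_apply]
    simp only [SimpleGraph.pathGraph_adj]
    split_ifs <;> simp
  have hAU :
      A * U.map ofRealHom = U.map ofRealHom * diagonal fun j => (pathEigenvalue m j : ℂ) := by
    rw [hA', ← Matrix.map_mul, pathGraph_adjMatrix_mul_pathEigenbasis, Matrix.map_mul,
      diagonal_map (map_zero _)]
    rfl
  have hp : ∑ j, (U x j * U j ⟨0, hm⟩) ^ 2 = (4 / ((m : ℝ) + 1) ^ 2) * ∑ j : Fin m,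
      Real.sin ((j.val + 1) * Real.pi / (m + 1)) ^ 2
        * Real.sin ((j.val + 1) * (x.val + 1) * Real.pi / (m + 1)) ^ 2 := by
    rw [Finset.mul_sum]
    refine Finset.sum_congr rfl fun j _ => ?_
    simp only [U, pathEigenbasis, of_apply, mul_pow, sq_sqrt_two_div_succ]
    field_simp
    ring_nf
  rw [← hp]
  exact ⟨avgProb_of_mul_eq_mul_diagonal (pathEigenvalue_injective m) (pathEigenbasis_mul_self m)
      hAU _ _,
    (sum_sq_pathEigenbasis_mul_le m x _).trans (le_add_of_nonneg_right (by positivity))⟩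
end
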